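/- Let k ≥ 1, let p₁,…,p_k ∈ ℝ³, let m ≥ 0, and let x ∈ ℝ³. Assume that either (a) ‖x‖ > 2·max_i ‖p_i‖ and ‖x‖ > 0, or (b) x ≠ 0 and for every i either p_i = 0 or ‖x‖ < ‖p_i‖. Then 2m + ∑_{i=1}^k (‖x‖² − 3⟪x, p_i⟫ + 2‖p_i‖²) / (2‖x − p_i‖³) > 0. -/

import Mathlib

/-!
By Cauchy–Schwarz each numerator is at least `‖x‖² - 3‖x‖‖p‖ + 2‖p‖² = (‖x‖ - ‖p‖)(‖x‖ - 2‖p‖)`,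
which is positive as soon as `‖x‖ < ‖p‖` or `2‖p‖ < ‖x‖`; both hypotheses put every `p i` in one
of these two regimes (`p i = 0` with `x ≠ 0` falls in the second), and the sum is nonempty.
-/

open RealInnerProductSpace

section

variable {E : Type*} [NormedAddCommGroup E] [InnerProductSpace ℝ E] {x p : E}

theorem norm_sq_sub_three_inner_add_two_norm_sq_pos (h : ‖x‖ < ‖p‖ ∨ 2 * ‖p‖ < ‖x‖) :
    0 < ‖x‖ ^ 2 - 3 * ⟪x, p⟫ + 2 * ‖p‖ ^ 2 := by
  have hp := norm_nonneg p
  have factor_pos : 0 < (‖x‖ - ‖p‖) * (‖x‖ - 2 * ‖p‖) := by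
    rcases h with h | h
    · exact mul_pos_of_neg_of_neg (by linarith) (by linarith)
    · exact mul_pos (by linarith) (by linarith)
  nlinarith [real_inner_le_norm x p]

theorem gibbonsHawking_term_pos (h : ‖x‖ < ‖p‖ ∨ 2 * ‖p‖ < ‖x‖) :
    0 < (‖x‖ ^ 2 - 3 * ⟪x, p⟫ + 2 * ‖p‖ ^ 2) / (2 * ‖x - p‖ ^ 3) := by
  have hne : x ≠ p := by
    rintro rfl
    rcases h with h | h <;> linarith [norm_nonneg x]
  have hdist : 0 < ‖x - p‖ := norm_sub_pos_iff.mpr hne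
  exact div_pos (norm_sq_sub_three_inner_add_two_norm_sq_pos h) (by positivity)

end

/-- **Convexity of circle-invariant spheres: positivity of the first minors.**
For the Gibbons--Hawking potential `φ(x) = m + ∑ i, 1/(2‖x - p i‖)`, if either
`‖x‖ > 2·max_i ‖p i‖` with `‖x‖ > 0`, or `x ≠ 0` and every `p i` is `0` or has
`‖x‖ < ‖p i‖`, then
`⟪∇φ(x), x⟫ + 2φ(x) = 2m + ∑ i, (‖x‖² − 3⟪x, p i⟫ + 2‖p i‖²)/(2‖x − p i‖³) > 0`. -/
theorem stmt_4 (k : ℕ) (hk : 1 ≤ k) (p : Fin k → EuclideanSpace ℝ (Fin 3))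
    (m : ℝ) (hm : 0 ≤ m) (x : EuclideanSpace ℝ (Fin 3))
    (h : (‖x‖ > 2 * (Finset.univ.sup' (Finset.univ_nonempty_iff.mpr ⟨⟨0, hk⟩⟩)
              fun i => ‖p i‖) ∧ ‖x‖ > 0)
        ∨ (x ≠ 0 ∧ ∀ i, p i = 0 ∨ ‖x‖ < ‖p i‖)) :
    0 < 2 * m + ∑ i : Fin k,
        (‖x‖ ^ 2 - 3 * ⟪x, p i⟫ + 2 * ‖p i‖ ^ 2) / (2 * ‖x - p i‖ ^ 3) := by
  have regime : ∀ i, ‖x‖ < ‖p i‖ ∨ 2 * ‖p i‖ < ‖x‖ := by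
    intro i
    rcases h with ⟨hfar, -⟩ | ⟨hx, hnear⟩
    · exact .inr (by linarith [Finset.le_sup' (fun i => ‖p i‖) (Finset.mem_univ i)])
    · rcases hnear i with hp | hp
      · exact .inr (by simpa [hp] using hx)
      · exact .inl hp
  have hsum := Finset.sum_pos (fun i _ => gibbonsHawking_term_pos (regime i))
    (Finset.univ_nonempty_iff.mpr ⟨⟨0, hk⟩⟩)
  linarith
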